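/- arXiv:1811.00734 — 3 statements merged into one kernel-verified Lean document; each statement's English description precedes it below -/
import Mathlib

section
/- Let ε_m ∈ (0, 1/2) be irrational, let N ∈ ℤ₊ and r ∈ ℤ with 0 < r/N < 2 − ε_m, let 1/2 < b < 1, and let 0 < δ < (1−b)·ε_m/4. Suppose s₀ ∈ [1−δ, 1+δ] and k is a real-valued function with k(s₀) ≥ ε_m + (2−ε_m)(1−δ) and k'(s₀) = r/N (so that N·(k(s₀) − s₀·k'(s₀)) ≥ N·ε_m − δ·(N(2−ε_m)+r) + ((2−ε_m)N − r)). Then N·(k(s₀) − s₀·k'(s₀)) > b. Specifically: since 2N − r ≥ 1 by integrality, one has N·ε_m − 4Nδ + ((2−ε_m)N − r) > N·b·ε_m + ((2−ε_m)N − r) > b, splitting into the cases N ≥ 1/ε_m and N < 1/ε_m. -/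
/-- Period lower bound for non-central orbits.  With `ε ∈ (0,1/2)` irrational,
`N ∈ ℤ₊`, `r ∈ ℤ` with `0 < r/N < 2 − ε`, `b ∈ (1/2,1)`, `0 < δ < (1−b)·ε/4`,
`s₀ ∈ [1−δ, 1+δ]`, `k(s₀) ≥ ε + (2−ε)(1−δ)` and `k'(s₀) = r/N`, one has
`2N − r ≥ 1` by integrality, and `N·(k(s₀) − s₀·k'(s₀)) > b`. -/
theorem stmt_12 (ε b δ s₀ : ℝ) (k k' : ℝ → ℝ) (N : ℕ) (r : ℤ)
    (hε : 0 < ε) (hε' : ε < 1/2) (hirr : Irrational ε)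
    (hN : 0 < N)
    (hr1 : 0 < (r : ℝ) / (N : ℝ)) (hr2 : (r : ℝ) / (N : ℝ) < 2 - ε)
    (hb : 1/2 < b) (hb' : b < 1)
    (hδ : 0 < δ) (hδ' : δ < (1 - b) * ε / 4)
    (hs : 1 - δ ≤ s₀) (hs' : s₀ ≤ 1 + δ)
    (hk : ε + (2 - ε) * (1 - δ) ≤ k s₀)
    (hk' : k' s₀ = (r : ℝ) / (N : ℝ)) :
    1 ≤ 2 * (N : ℤ) - r ∧ b < (N : ℝ) * (k s₀ - s₀ * k' s₀) := by
  have hNR : (0:ℝ) < (N:ℝ) := by exact_mod_cast hN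
  have hrlt : (r:ℝ) < (2 - ε) * N := by
    have := (div_lt_iff₀ hNR).mp hr2
    linarith
  have hrpos : (0:ℝ) < (r:ℝ) := by
    have := (div_pos_iff.mp hr1)
    rcases this with ⟨h, _⟩ | ⟨_, h⟩
    · exact h
    · linarith
  have hrlt2 : (r:ℝ) < 2 * N := by nlinarith
  have hint : r ≤ 2 * (N:ℤ) - 1 := by
    have : (r:ℝ) < ((2 * (N:ℤ) : ℤ) : ℝ) := by push_cast; linarith
    have h2 : r < 2 * (N:ℤ) := by exact_mod_cast this
    omega
  refine ⟨by omega, ?_⟩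
  have hintR : (r:ℝ) ≤ 2 * (N:ℝ) - 1 := by exact_mod_cast hint
  have hkey : (N:ℝ) * (k s₀ - s₀ * k' s₀) ≥
      (N:ℝ) * ε + ((2 - ε) * N - r) - δ * ((2 - ε) * N + r) := by
    rw [hk']
    have : (N:ℝ) * (s₀ * ((r:ℝ)/(N:ℝ))) = s₀ * r := by
      field_simp
    have hbound : s₀ * r ≤ (1 + δ) * r := by nlinarith
    nlinarith [mul_le_mul_of_nonneg_left hk (le_of_lt hNR)]
  have h4 : δ * ((2 - ε) * N + r) < (1 - b) * ε * N := by
    have h1 : (2 - ε) * N + r < 4 * N := by nlinarith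
    have h2 : δ * ((2 - ε) * N + r) < δ * (4 * N) := by
      apply mul_lt_mul_of_pos_left h1 hδ
    nlinarith
  rcases le_or_gt 1 ((N:ℝ) * ε) with hcase | hcase
  · -- N ε ≥ 1
    nlinarith
  · -- N ε < 1
    nlinarith
end

section
/- For every positive integer D, the Euclidean space ℝ^D admits a quasi-isometric embedding into the cone Δ_{2D} = {(x₁,…,x_{2D}) ∈ [0,∞)^{2D} : x₁ ≥ x₂ ≥ ⋯ ≥ x_{2D}} equipped with the ℓ^∞ metric; that is, there is a map f : ℝ^D → Δ_{2D} and constants C ≥ 1, K ≥ 0 such that (1/C)·‖x − y‖_∞ − K ≤ ‖f(x) − f(y)‖_∞ ≤ C·‖x − y‖_∞ + K for all x, y ∈ ℝ^D. -/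
open Finset

/-- coordinatewise encoding: positive/negative parts interleaved -/
noncomputable def stmt13dd (D : ℕ) (x : Fin D → ℝ) (j : ℕ) : ℝ :=
  if h : j < 2 * D then
    (if j % 2 = 0 then max (x ⟨j / 2, by omega⟩) 0 else max (-(x ⟨j / 2, by omega⟩)) 0)
  else 0

/-- suffix sums of the encoding -/
noncomputable def stmt13g (D : ℕ) (x : Fin D → ℝ) (k : ℕ) : ℝ :=
  ∑ j ∈ Finset.range (2 * D), if k ≤ j then stmt13dd D x j else 0

lemma stmt13dd_nonneg (D : ℕ) (x : Fin D → ℝ) (j : ℕ) : 0 ≤ stmt13dd D x j := by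
  unfold stmt13dd
  split
  · split <;> exact le_max_right _ _
  · exact le_refl 0

lemma stmt13dd_lip (D : ℕ) (x y : Fin D → ℝ) (j : ℕ) :
    |stmt13dd D x j - stmt13dd D y j| ≤ dist x y := by
  unfold stmt13dd
  split
  · next h =>
    split
    · calc |max (x ⟨j / 2, by omega⟩) 0 - max (y ⟨j / 2, by omega⟩) 0|
          ≤ |x ⟨j / 2, by omega⟩ - y ⟨j / 2, by omega⟩| := abs_max_sub_max_le_abs _ _ _
        _ = dist (x ⟨j / 2, by omega⟩) (y ⟨j / 2, by omega⟩) := (Real.dist_eq _ _).symm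
        _ ≤ dist x y := dist_le_pi_dist x y _
    · calc |max (-(x ⟨j / 2, by omega⟩)) 0 - max (-(y ⟨j / 2, by omega⟩)) 0|
          ≤ |(-(x ⟨j / 2, by omega⟩)) - (-(y ⟨j / 2, by omega⟩))| := abs_max_sub_max_le_abs _ _ _
        _ = |x ⟨j / 2, by omega⟩ - y ⟨j / 2, by omega⟩| := by rw [← abs_neg]; ring_nf
        _ = dist (x ⟨j / 2, by omega⟩) (y ⟨j / 2, by omega⟩) := (Real.dist_eq _ _).symm
        _ ≤ dist x y := dist_le_pi_dist x y _
  · simpa using dist_nonneg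

lemma stmt13g_zero (D : ℕ) (x : Fin D → ℝ) (k : ℕ) (hk : 2 * D ≤ k) : stmt13g D x k = 0 := by
  unfold stmt13g
  refine Finset.sum_eq_zero fun j hj => ?_
  rw [Finset.mem_range] at hj
  rw [if_neg (by omega)]

lemma stmt13g_sub (D : ℕ) (x : Fin D → ℝ) (k : ℕ) (hk : k < 2 * D) :
    stmt13g D x k - stmt13g D x (k + 1) = stmt13dd D x k := by
  unfold stmt13g
  rw [← Finset.sum_sub_distrib]
  have h : ∀ j ∈ Finset.range (2 * D),
      ((if k ≤ j then stmt13dd D x j else 0) - (if k + 1 ≤ j then stmt13dd D x j else 0))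
      = if j = k then stmt13dd D x j else 0 := by
    intro j _
    split_ifs <;> first | (exfalso; omega) | ring
  rw [Finset.sum_congr rfl h, Finset.sum_ite_eq' (Finset.range (2 * D)) k]
  rw [if_pos (Finset.mem_range.mpr hk)]

lemma stmt13g_lip (D : ℕ) (x y : Fin D → ℝ) (k : ℕ) :
    |stmt13g D x k - stmt13g D y k| ≤ (2 * D : ℝ) * dist x y := by
  unfold stmt13g
  rw [← Finset.sum_sub_distrib]
  calc |∑ j ∈ Finset.range (2 * D),
        ((if k ≤ j then stmt13dd D x j else 0) - (if k ≤ j then stmt13dd D y j else 0))|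
      ≤ ∑ j ∈ Finset.range (2 * D),
        |(if k ≤ j then stmt13dd D x j else 0) - (if k ≤ j then stmt13dd D y j else 0)| :=
        Finset.abs_sum_le_sum_abs _ _
    _ ≤ ∑ j ∈ Finset.range (2 * D), dist x y := by
        refine Finset.sum_le_sum fun j _ => ?_
        split_ifs
        · exact stmt13dd_lip D x y j
        · simpa using dist_nonneg
    _ = (2 * D : ℝ) * dist x y := by
        rw [Finset.sum_const, Finset.card_range]; ring

lemma stmt13g_anti (D : ℕ) (x : Fin D → ℝ) (k k' : ℕ) (h : k ≤ k') :
    stmt13g D x k' ≤ stmt13g D x k := by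
  unfold stmt13g
  refine Finset.sum_le_sum fun j _ => ?_
  split_ifs with h1 h2
  · exact le_refl _
  · exact absurd (le_trans h h1) h2
  · exact stmt13dd_nonneg D x j
  · exact le_refl 0

lemma stmt13_maxsub (a : ℝ) : max a 0 - max (-a) 0 = a := by
  rcases le_total a 0 with h | h
  · rw [max_eq_right h, max_eq_left (neg_nonneg.mpr h)]; ring
  · rw [max_eq_left h, max_eq_right (neg_nonpos.mpr h)]; ring

/-- For every positive integer `D`, `ℝ^D` (with the sup metric) admits a
quasi-isometric embedding into the cone `Δ_{2D}` of nonincreasing nonnegative `2D`-tuples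
with the `ℓ^∞` metric. -/
theorem stmt_13 (D : ℕ) (hD : 0 < D) :
    ∃ (f : (Fin D → ℝ) → (Fin (2 * D) → ℝ)) (C K : ℝ), 1 ≤ C ∧ 0 ≤ K ∧
      (∀ x, (∀ i, 0 ≤ f x i) ∧ (∀ i j : Fin (2 * D), i ≤ j → f x j ≤ f x i)) ∧
      (∀ x y, (1 / C) * dist x y - K ≤ dist (f x) (f y) ∧
        dist (f x) (f y) ≤ C * dist x y + K) := by
  set f : (Fin D → ℝ) → (Fin (2 * D) → ℝ) := fun x i => stmt13g D x i.val with hf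
  have hC0 : (0 : ℝ) < 2 * D + 4 := by positivity
  have hC4 : (4 : ℝ) ≤ 2 * D + 4 := by
    have : (0 : ℝ) ≤ (D : ℝ) := Nat.cast_nonneg D
    linarith
  refine ⟨f, 2 * D + 4, 0, by linarith, le_refl 0, ?_, ?_⟩
  · intro x
    constructor
    · intro i
      exact Finset.sum_nonneg fun j _ => by
        split_ifs
        · exact stmt13dd_nonneg D x j
        · exact le_refl 0
    · intro i j hij
      exact stmt13g_anti D x i.val j.val hij
  · intro x y
    -- key bound: |g x m - g y m| ≤ dist (f x) (f y) for all m
    have hA : ∀ m : ℕ, |stmt13g D x m - stmt13g D y m| ≤ dist (f x) (f y) := by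
      intro m
      by_cases hm : m < 2 * D
      · calc |stmt13g D x m - stmt13g D y m|
            = dist (f x ⟨m, hm⟩) (f y ⟨m, hm⟩) := (Real.dist_eq _ _).symm
          _ ≤ dist (f x) (f y) := dist_le_pi_dist _ _ _
      · rw [stmt13g_zero D x m (by omega), stmt13g_zero D y m (by omega)]
        simpa using dist_nonneg
    have hdd : ∀ k : ℕ, k < 2 * D →
        |stmt13dd D x k - stmt13dd D y k| ≤ 2 * dist (f x) (f y) := by
      intro k hk
      have h1 := hA k
      have h2 := hA (k + 1)
      have e1 := stmt13g_sub D x k hk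
      have e2 := stmt13g_sub D y k hk
      have : stmt13dd D x k - stmt13dd D y k
          = (stmt13g D x k - stmt13g D y k) - (stmt13g D x (k+1) - stmt13g D y (k+1)) := by
        rw [← e1, ← e2]; ring
      rw [this]
      calc |(stmt13g D x k - stmt13g D y k) - (stmt13g D x (k+1) - stmt13g D y (k+1))|
          ≤ |stmt13g D x k - stmt13g D y k| + |stmt13g D x (k+1) - stmt13g D y (k+1)| :=
            abs_sub _ _
        _ ≤ 2 * dist (f x) (f y) := by linarith
    constructor
    · -- lower bound
      have hcoord : ∀ i : Fin D, |x i - y i| ≤ 4 * dist (f x) (f y) := by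
        intro i
        have h2i : 2 * i.val < 2 * D := by omega
        have h2i1 : 2 * i.val + 1 < 2 * D := by omega
        have ex1 : stmt13dd D x (2 * i.val) = max (x i) 0 := by
          unfold stmt13dd
          rw [dif_pos h2i, if_pos (by omega)]
          have hi : (⟨2 * i.val / 2, by omega⟩ : Fin D) = i := by
            apply Fin.ext
            simp only []
            omega
          rw [hi]
        have ey1 : stmt13dd D y (2 * i.val) = max (y i) 0 := by
          unfold stmt13dd
          rw [dif_pos h2i, if_pos (by omega)]
          have hi : (⟨(2 * i.val) / 2, by omega⟩ : Fin D) = i := by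
            apply Fin.ext
            show (2 * i.val) / 2 = i.val
            omega
          rw [hi]
        have ex2 : stmt13dd D x (2 * i.val + 1) = max (-(x i)) 0 := by
          unfold stmt13dd
          rw [dif_pos h2i1, if_neg (by omega)]
          have hi : (⟨(2 * i.val + 1) / 2, by omega⟩ : Fin D) = i := by
            apply Fin.ext
            show (2 * i.val + 1) / 2 = i.val
            omega
          rw [hi]
        have ey2 : stmt13dd D y (2 * i.val + 1) = max (-(y i)) 0 := by
          unfold stmt13dd
          rw [dif_pos h2i1, if_neg (by omega)]
          have hi : (⟨(2 * i.val + 1) / 2, by omega⟩ : Fin D) = i := by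
            apply Fin.ext
            show (2 * i.val + 1) / 2 = i.val
            omega
          rw [hi]
        have key : x i - y i = (stmt13dd D x (2 * i.val) - stmt13dd D y (2 * i.val))
            - (stmt13dd D x (2 * i.val + 1) - stmt13dd D y (2 * i.val + 1)) := by
          rw [ex1, ey1, ex2, ey2]
          have ha := stmt13_maxsub (x i)
          have hb := stmt13_maxsub (y i)
          linarith
        have b1 := hdd (2 * i.val) h2i
        have b2 := hdd (2 * i.val + 1) h2i1
        calc |x i - y i|
            ≤ |stmt13dd D x (2 * i.val) - stmt13dd D y (2 * i.val)|
              + |stmt13dd D x (2 * i.val + 1) - stmt13dd D y (2 * i.val + 1)| := by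
              rw [key]; exact abs_sub _ _
          _ ≤ 4 * dist (f x) (f y) := by linarith
      have hxy : dist x y ≤ 4 * dist (f x) (f y) := by
        rw [dist_pi_le_iff (by positivity)]
        intro i
        rw [Real.dist_eq]
        exact hcoord i
      have hd0 : 0 ≤ dist (f x) (f y) := dist_nonneg
      rw [sub_zero]
      rw [div_mul_eq_mul_div, one_mul, div_le_iff₀ hC0]
      nlinarith
    · -- upper bound
      have : dist (f x) (f y) ≤ (2 * D : ℝ) * dist x y := by
        rw [dist_pi_le_iff (by positivity)]
        intro i
        rw [Real.dist_eq]
        exact stmt13g_lip D x y i.val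
      have hd0 : 0 ≤ dist x y := dist_nonneg
      nlinarith
end

section
/- Let B, c > 0 and suppose β > 2 satisfies: there exist integers p₁, …, p_n with 0 < p_j·(a_j/a_{n+1}) − β < c·β^{−1/(n−1)} for each j (n ≥ 2 fixed, a_j > 0). Let 0 < ε < β⁻² and 0 < δ < ε/(3β), and suppose N ∈ ℤ₊, k ∈ ℤ, j ∈ {1,…,n} satisfy N·β·a_{n+1} − k·a_j > 0. Then N·β·a_{n+1} − k·a_j ≥ a_j − N·ζ·a_{n+1} where ζ = p_j·(a_j/a_{n+1}) − β, and consequently: if N ≤ a_j/(2·ζ·a_{n+1}) then ε·(β−1)·(N·β·a_{n+1} − k·a_j) ≥ ε·(β−1)·a_j/2 ≥ (a_j/4)·β·ε; while if N > a_j/(2·ζ·a_{n+1}) then ε·(a_{n+1}/3)·N > ε·(a_j/(6c))·β^{1/(n−1)}. -/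
/-- The dichotomy of Lemma `strongTbound`.  With `n ≥ 2`, `aj, an1 > 0`,
`c > 0`, `β > 2`, `ζ = pj·(aj/an1) − β ∈ (0, c·β^{−1/(n−1)})`, `0 < ε < β⁻²`,
`0 < δ < ε/(3β)`, `N ∈ ℤ₊`, `k ∈ ℤ` and `N·β·an1 − k·aj > 0`, one has
`N·β·an1 − k·aj ≥ aj − N·ζ·an1`; if `N ≤ aj/(2ζ·an1)` then
`ε(β−1)(N·β·an1 − k·aj) ≥ ε(β−1)·aj/2 ≥ (aj/4)·β·ε`, while if `N > aj/(2ζ·an1)` then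
`ε·(an1/3)·N > ε·(aj/(6c))·β^{1/(n−1)}`. -/
theorem stmt_19 (n : ℕ) (hn : 2 ≤ n) (aj an1 c β ζ ε δ : ℝ) (pj : ℤ)
    (haj : 0 < aj) (han1 : 0 < an1) (hc : 0 < c) (hβ : 2 < β)
    (hζdef : ζ = (pj : ℝ) * (aj / an1) - β)
    (hζ : 0 < ζ) (hζ' : ζ < c * β ^ (-(1 : ℝ) / ((n : ℝ) - 1)))
    (hε : 0 < ε) (hε' : ε < β⁻¹ ^ 2)
    (hδ : 0 < δ) (hδ' : δ < ε / (3 * β))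
    (N : ℕ) (hN : 0 < N) (k : ℤ)
    (h : 0 < (N : ℝ) * β * an1 - (k : ℝ) * aj) :
    (aj - (N : ℝ) * ζ * an1 ≤ (N : ℝ) * β * an1 - (k : ℝ) * aj) ∧
    ((N : ℝ) ≤ aj / (2 * ζ * an1) →
      ε * (β - 1) * (aj / 2) ≤ ε * (β - 1) * ((N : ℝ) * β * an1 - (k : ℝ) * aj) ∧
      (aj / 4) * β * ε ≤ ε * (β - 1) * (aj / 2)) ∧
    (aj / (2 * ζ * an1) < (N : ℝ) →
      ε * (aj / (6 * c)) * β ^ ((1 : ℝ) / ((n : ℝ) - 1)) < ε * (an1 / 3) * (N : ℝ)) := by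
  have han1' : an1 ≠ 0 := ne_of_gt han1
  have hβ0 : (0:ℝ) < β := by linarith
  -- key identity
  have hid : (N : ℝ) * β * an1 - (k : ℝ) * aj
      = (((N : ℤ) * pj - k : ℤ) : ℝ) * aj - (N : ℝ) * ζ * an1 := by
    push_cast
    rw [hζdef]
    field_simp
    ring
  have hNζ : 0 < (N : ℝ) * ζ * an1 := by
    have : (0:ℝ) < (N:ℝ) := by exact_mod_cast hN
    positivity
  have hm1 : (1 : ℝ) ≤ (((N : ℤ) * pj - k : ℤ) : ℝ) := by
    have hpos : (0:ℝ) < (((N : ℤ) * pj - k : ℤ) : ℝ) * aj := by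
      rw [hid] at h; linarith
    have : (0:ℝ) < (((N : ℤ) * pj - k : ℤ) : ℝ) := by
      by_contra hcon; push_neg at hcon; nlinarith
    exact_mod_cast (by exact_mod_cast this : (0:ℤ) < (N : ℤ) * pj - k)
  have part1 : aj - (N : ℝ) * ζ * an1 ≤ (N : ℝ) * β * an1 - (k : ℝ) * aj := by
    rw [hid]; nlinarith
  refine ⟨part1, ?_, ?_⟩
  · intro hsmall
    have hζan1 : 0 < 2 * ζ * an1 := by positivity
    have hNza : (N : ℝ) * ζ * an1 ≤ aj / 2 := by
      rw [le_div_iff₀ hζan1] at hsmall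
      nlinarith
    constructor
    · have : aj / 2 ≤ (N : ℝ) * β * an1 - (k : ℝ) * aj := by linarith
      have hεβ : 0 < ε * (β - 1) := mul_pos hε (by linarith)
      nlinarith
    · nlinarith [mul_nonneg (mul_nonneg hε.le haj.le) (by linarith : (0:ℝ) ≤ β - 2)]
  · intro hlarge
    have hζan1 : 0 < 2 * ζ * an1 := by positivity
    have hN6 : ε * (an1 / 3) * (aj / (2 * ζ * an1)) < ε * (an1 / 3) * (N : ℝ) := by
      have : 0 < ε * (an1 / 3) := by positivity
      exact (mul_lt_mul_iff_right₀ this).mpr hlarge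
    have hsimp : ε * (an1 / 3) * (aj / (2 * ζ * an1)) = ε * aj / (6 * ζ) := by
      field_simp; ring
    rw [hsimp] at hN6
    set t : ℝ := β ^ ((1 : ℝ) / ((n : ℝ) - 1)) with ht
    have ht0 : 0 < t := Real.rpow_pos_of_pos hβ0 _
    have hinv : β ^ (-(1 : ℝ) / ((n : ℝ) - 1)) = t⁻¹ := by
      rw [neg_div, Real.rpow_neg hβ0.le]
    rw [hinv] at hζ'
    -- ζ < c / t  ⇒  ε*aj/(6c) * t < ε*aj/(6ζ)
    have hct : ζ * t < c := by
      have := (mul_lt_mul_iff_left₀ ht0).mpr hζ'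
      rwa [inv_mul_cancel_right₀ (ne_of_gt ht0)] at this
    have : ε * (aj / (6 * c)) * t < ε * aj / (6 * ζ) := by
      have heq : ε * (aj / (6 * c)) * t = ε * aj * t / (6 * c) := by ring
      rw [heq, div_lt_div_iff₀ (by positivity) (by positivity)]
      have h6 : (0:ℝ) < 6 * ε * aj := by positivity
      have h7 := mul_lt_mul_of_pos_left hct h6
      linear_combination h7
    linarith
end
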